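/- Suppose ‖x_i‖_1 ≤ R for all i ∈ {1,…,n}, where R > 0, and that n = m·b for integers m ≥ 1 and b ≥ 1. Then for every subset B ⊆ {1,…,n} with |B| = b and every W ∈ ℝ^{k×d}, the mini-batch gradient noise satisfies ‖(1/b)∑_{i∈B} g_i(W) − D(W)‖_1 ≤ 2(m−1) R · G(W). -/

import Mathlib

open Finset Filter

/-- Softmax map on `ℝ^k`. -/
noncomputable def softmax {k : ℕ} (z : Fin k → ℝ) (c : Fin k) : ℝ :=
  Real.exp (z c) / ∑ j, Real.exp (z j)

/-- Logits `W x` of a linear classifier `W : ℝ^{k×d}` on input `x : ℝ^d`. -/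
noncomputable def logits {k d : ℕ} (W : Fin k → Fin d → ℝ) (x : Fin d → ℝ) : Fin k → ℝ :=
  fun c => ∑ j, W c j * x j

/-- Cross-entropy loss `L(W) = -(1/n) ∑ᵢ log S_{yᵢ}(W xᵢ)`. -/
noncomputable def lossCE {n k d : ℕ} (x : Fin n → Fin d → ℝ) (y : Fin n → Fin k)
    (W : Fin k → Fin d → ℝ) : ℝ :=
  -((1 : ℝ) / n) * ∑ i, Real.log (softmax (logits W (x i)) (y i))

/-- Proxy function `G(W) = (1/n) ∑ᵢ (1 - S_{yᵢ}(W xᵢ))`. -/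
noncomputable def proxyG {n k d : ℕ} (x : Fin n → Fin d → ℝ) (y : Fin n → Fin k)
    (W : Fin k → Fin d → ℝ) : ℝ :=
  ((1 : ℝ) / n) * ∑ i, (1 - softmax (logits W (x i)) (y i))

/-- Per-sample gradient matrix `gᵢ(W) = (S(W xᵢ) - e_{yᵢ}) xᵢᵀ`. -/
noncomputable def sampleGrad {k d : ℕ} (x : Fin d → ℝ) (y : Fin k)
    (W : Fin k → Fin d → ℝ) : Fin k → Fin d → ℝ :=
  fun c j => (softmax (logits W x) c - (if c = y then 1 else 0)) * x j

/-- Full gradient matrix `D(W) = (1/n) ∑ᵢ gᵢ(W)`. -/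
noncomputable def gradCE {n k d : ℕ} (x : Fin n → Fin d → ℝ) (y : Fin n → Fin k)
    (W : Fin k → Fin d → ℝ) : Fin k → Fin d → ℝ :=
  fun c j => ((1 : ℝ) / n) * ∑ i, sampleGrad (x i) (y i) W c j

/-- Entry-wise 1-norm of a matrix. -/
noncomputable def norm1M {k d : ℕ} (A : Fin k → Fin d → ℝ) : ℝ :=
  ∑ c, ∑ j, |A c j|

/-- 1-norm of a vector. -/
noncomputable def norm1V {d : ℕ} (v : Fin d → ℝ) : ℝ := ∑ j, |v j|

/-- `min_{c ≠ y} (e_y - e_c)ᵀ A x`. -/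
noncomputable def marginMin {k d : ℕ} (hk : 2 ≤ k) (A : Fin k → Fin d → ℝ)
    (x : Fin d → ℝ) (y : Fin k) : ℝ :=
  (Finset.univ.erase y).inf'
    (by
      obtain ⟨cne, hcne⟩ := Fintype.exists_ne_of_one_lt_card
        (by simpa using (by omega : 1 < k)) y
      exact ⟨cne, Finset.mem_erase.mpr ⟨hcne, Finset.mem_univ _⟩⟩)
    (fun c => logits A x y - logits A x c)

/-- `min_{i ∈ [n], c ≠ yᵢ} (e_{yᵢ} - e_c)ᵀ W xᵢ`. -/
noncomputable def dataMargin {n k d : ℕ} (hn : 1 ≤ n) (hk : 2 ≤ k)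
    (x : Fin n → Fin d → ℝ) (y : Fin n → Fin k) (W : Fin k → Fin d → ℝ) : ℝ :=
  Finset.univ.inf' ⟨⟨0, by omega⟩, Finset.mem_univ _⟩
    (fun i => marginMin hk W (x i) (y i))

/-- Max margin `γ` over the max-norm unit ball. -/
noncomputable def gammaMax {n k d : ℕ} (hn : 1 ≤ n) (hk : 2 ≤ k)
    (x : Fin n → Fin d → ℝ) (y : Fin n → Fin k) : ℝ :=
  sSup { g : ℝ | ∃ W' : Fin k → Fin d → ℝ, ‖W'‖ ≤ 1 ∧ g = dataMargin hn hk x y W' }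

/-- Mini-batch gradient `(1/b) ∑_{i ∈ B} gᵢ(W)`. -/
noncomputable def batchGrad {n k d : ℕ} (x : Fin n → Fin d → ℝ) (y : Fin n → Fin k)
    (B : Finset (Fin n)) (b : ℕ) (W : Fin k → Fin d → ℝ) : Fin k → Fin d → ℝ :=
  fun c j => ((1 : ℝ) / b) * ∑ i ∈ B, sampleGrad (x i) (y i) W c j

/-- Frobenius norm of a matrix. -/
noncomputable def frobNorm {k d : ℕ} (A : Fin k → Fin d → ℝ) : ℝ :=
  Real.sqrt (∑ c, ∑ j, (A c j) ^ 2)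

/-!
The deviation `(1/b) ∑_{i∈B} gᵢ − (1/n) ∑ᵢ gᵢ` is `∑ᵢ wᵢ gᵢ` with weights `wᵢ = 1_B(i)/b − 1/n`.
Since `n = m b`, every `|wᵢ| ≤ (m − 1)/n`: for `i ∈ B` this is an equality, and an `i ∉ B`
exists only if `b < n`, i.e. `m ≥ 2`, in which case `1/n ≤ (m − 1)/n`. Moreover
`‖gᵢ‖₁ = ‖S − e_{yᵢ}‖₁ ‖xᵢ‖₁ = 2 (1 − S_{yᵢ}) ‖xᵢ‖₁ ≤ 2 (1 − S_{yᵢ}) R`, and summing gives `G`.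
-/

theorem sum_abs_sub_ite_eq {ι : Type*} [Fintype ι] [DecidableEq ι] {p : ι → ℝ}
    (hp : ∀ i, 0 ≤ p i) (hsum : ∑ i, p i = 1) (y : ι) :
    ∑ c, |p c - if c = y then 1 else 0| = 2 * (1 - p y) := by
  have hrest : ∑ c ∈ univ.erase y, p c = 1 - p y := by
    rw [← hsum, ← add_sum_erase _ _ (mem_univ y)]; ring
  have hy : p y ≤ 1 := hsum ▸ single_le_sum (fun i _ => hp i) (mem_univ y)
  rw [← add_sum_erase _ _ (mem_univ y), if_pos rfl, abs_of_nonpos (by linarith),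
    sum_congr rfl fun c hc => by rw [if_neg (ne_of_mem_erase hc), sub_zero, abs_of_nonneg (hp c)],
    hrest]
  ring

theorem norm_sum_sub_sum_div_card_le {ι E : Type*} [Fintype ι] [SeminormedAddCommGroup E]
    [NormedSpace ℝ E] (g : ι → E) {m b : ℕ} (hm : 1 ≤ m) (hb : 1 ≤ b)
    (hcard : Fintype.card ι = m * b) {B : Finset ι} (hB : B.card = b) :
    ‖(1 / b : ℝ) • ∑ i ∈ B, g i - (1 / Fintype.card ι : ℝ) • ∑ i, g i‖
      ≤ ((m : ℝ) - 1) / Fintype.card ι * ∑ i, ‖g i‖ := by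
  classical
  set n := Fintype.card ι
  set w : ι → ℝ := fun i => (if i ∈ B then (1 / b : ℝ) else 0) - 1 / n
  have hn : (n : ℝ) = m * b := by exact_mod_cast hcard
  have hdev : (1 / b : ℝ) • ∑ i ∈ B, g i - (1 / n : ℝ) • ∑ i, g i = ∑ i, w i • g i := by
    simp only [w, sub_smul, ite_smul, zero_smul, sum_sub_distrib, sum_ite_mem, univ_inter,
      smul_sum]
  have hw : ∀ i, |w i| ≤ ((m : ℝ) - 1) / n := by
    intro i
    by_cases hi : i ∈ B
    · have hwi : w i = ((m : ℝ) - 1) / n := by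
        simp only [w, if_pos hi, hn]; field_simp
      rw [hwi, abs_of_nonneg (div_nonneg (by linarith [show (1 : ℝ) ≤ m by exact_mod_cast hm])
        (by positivity))]
    · have hlt : b < m * b := by rw [← hcard, ← hB]; exact card_lt_univ_of_notMem hi
      have h2 : (2 : ℝ) ≤ m := by exact_mod_cast one_lt_of_lt_mul_left hlt
      rw [show w i = -(1 / n) by simp [w, hi], abs_neg, abs_of_nonneg (by positivity)]
      gcongr
      linarith
  calc ‖(1 / b : ℝ) • ∑ i ∈ B, g i - (1 / n : ℝ) • ∑ i, g i‖
      ≤ ∑ i, |w i| * ‖g i‖ := by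
        rw [hdev]
        refine (norm_sum_le _ _).trans_eq (sum_congr rfl fun i _ => ?_)
        rw [norm_smul, Real.norm_eq_abs]
    _ ≤ ∑ i, ((m : ℝ) - 1) / n * ‖g i‖ := by gcongr with i; exact hw i
    _ = ((m : ℝ) - 1) / n * ∑ i, ‖g i‖ := (mul_sum _ _ _).symm

theorem softmax_nonneg {k : ℕ} (z : Fin k → ℝ) (c : Fin k) : 0 ≤ softmax z c :=
  div_nonneg (Real.exp_pos _).le (sum_nonneg fun _ _ => (Real.exp_pos _).le)

theorem sum_softmax {k : ℕ} [NeZero k] (z : Fin k → ℝ) : ∑ c, softmax z c = 1 := by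
  have hpos : 0 < ∑ j, Real.exp (z j) := sum_pos (fun j _ => Real.exp_pos _) univ_nonempty
  simp only [softmax, ← sum_div, div_self hpos.ne']

theorem softmax_le_one {k : ℕ} (z : Fin k → ℝ) (c : Fin k) : softmax z c ≤ 1 := by
  have : NeZero k := ⟨c.pos.ne'⟩
  exact sum_softmax z ▸ single_le_sum (fun i _ => softmax_nonneg z i) (mem_univ c)

theorem norm1M_mul_apply {k d : ℕ} (u : Fin k → ℝ) (v : Fin d → ℝ) :
    norm1M (fun c j => u c * v j) = norm1V u * norm1V v := by
  simp only [norm1M, norm1V, abs_mul, sum_mul_sum]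

theorem norm1M_sampleGrad {k d : ℕ} (x : Fin d → ℝ) (y : Fin k) (W : Fin k → Fin d → ℝ) :
    norm1M (sampleGrad x y W) = 2 * (1 - softmax (logits W x) y) * norm1V x := by
  have : NeZero k := ⟨y.pos.ne'⟩
  refine (norm1M_mul_apply (fun c => softmax (logits W x) c - if c = y then 1 else 0) x).trans ?_
  rw [norm1V, sum_abs_sub_ite_eq (softmax_nonneg _) (sum_softmax _) y]

theorem norm1M_batchGrad_sub_gradCE_le {n k d : ℕ} (x : Fin n → Fin d → ℝ) (y : Fin n → Fin k)
    (W : Fin k → Fin d → ℝ) {m b : ℕ} (hm : 1 ≤ m) (hb : 1 ≤ b) (hnb : n = m * b)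
    {B : Finset (Fin n)} (hB : B.card = b) :
    norm1M (batchGrad x y B b W - gradCE x y W)
      ≤ ((m : ℝ) - 1) / n * ∑ i, norm1M (sampleGrad (x i) (y i) W) := by
  have hcard : Fintype.card (Fin n) = m * b := by rw [Fintype.card_fin, hnb]
  have hentry : ∀ c j, |(batchGrad x y B b W - gradCE x y W) c j|
      ≤ ((m : ℝ) - 1) / n * ∑ i, |sampleGrad (x i) (y i) W c j| := fun c j => by
    simpa [batchGrad, gradCE, Real.norm_eq_abs, smul_eq_mul] using
      norm_sum_sub_sum_div_card_le (fun i => sampleGrad (x i) (y i) W c j) hm hb hcard hB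
  calc norm1M (batchGrad x y B b W - gradCE x y W)
      ≤ ∑ c, ∑ j, ((m : ℝ) - 1) / n * ∑ i, |sampleGrad (x i) (y i) W c j| :=
        sum_le_sum fun c _ => sum_le_sum fun j _ => hentry c j
    _ = ((m : ℝ) - 1) / n * ∑ i, norm1M (sampleGrad (x i) (y i) W) := by
        simp only [← mul_sum, norm1M]
        exact congrArg _ ((sum_congr rfl fun c _ => sum_comm).trans sum_comm)

theorem minibatch_noise_bound_general (n k d : ℕ)
    (x : Fin n → Fin d → ℝ) (y : Fin n → Fin k)
    (R : ℝ) (hx : ∀ i, norm1V (x i) ≤ R)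
    (m b : ℕ) (hm : 1 ≤ m) (hb : 1 ≤ b) (hnb : n = m * b)
    (B : Finset (Fin n)) (hB : B.card = b)
    (W : Fin k → Fin d → ℝ) :
    norm1M (batchGrad x y B b W - gradCE x y W)
      ≤ 2 * ((m : ℝ) - 1) * R * proxyG x y W := by
  have hweight : 0 ≤ ((m : ℝ) - 1) / n :=
    div_nonneg (sub_nonneg.2 (by exact_mod_cast hm)) n.cast_nonneg
  calc norm1M (batchGrad x y B b W - gradCE x y W)
      ≤ ((m : ℝ) - 1) / n * ∑ i, norm1M (sampleGrad (x i) (y i) W) :=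
        norm1M_batchGrad_sub_gradCE_le x y W hm hb hnb hB
    _ ≤ ((m : ℝ) - 1) / n * ∑ i, 2 * (1 - softmax (logits W (x i)) (y i)) * R := by
        gcongr with i
        rw [norm1M_sampleGrad]
        have := softmax_le_one (logits W (x i)) (y i)
        exact mul_le_mul_of_nonneg_left (hx i) (by linarith)
    _ = 2 * ((m : ℝ) - 1) * R * proxyG x y W := by
        simp only [proxyG, ← sum_mul, ← mul_sum]
        ring

/-- mini-batch gradient noise bound
`‖(1/b) ∑_{i∈B} gᵢ(W) − D(W)‖₁ ≤ 2(m−1)R·G(W)`. -/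
theorem minibatch_noise_bound (n k d : ℕ) (hn : 1 ≤ n) (hk : 2 ≤ k) (hd : 1 ≤ d)
    (x : Fin n → Fin d → ℝ) (y : Fin n → Fin k)
    (R : ℝ) (hR : 0 < R) (hx : ∀ i, norm1V (x i) ≤ R)
    (m b : ℕ) (hm : 1 ≤ m) (hb : 1 ≤ b) (hnb : n = m * b)
    (B : Finset (Fin n)) (hB : B.card = b)
    (W : Fin k → Fin d → ℝ) :
    norm1M (batchGrad x y B b W - gradCE x y W)
      ≤ 2 * ((m : ℝ) - 1) * R * proxyG x y W :=
  minibatch_noise_bound_general n k d x y R hx m b hm hb hnb B hB W
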